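/- arXiv:1710.09453 — 3 statements merged into one kernel-verified Lean document; each statement's English description precedes it below -/
import Mathlib

section
/- Let Ω = (−1,1)² ∖ ((0,1)×{0}) ⊂ ℝ² be the slit square. There exists a function f : Ω → ℝ that is differentiable on Ω with ‖f‖_∞ ≤ 1 and sup_{x∈Ω} |∇f(x)| < ∞ (hence f ∈ W^{1,p}(Ω) for every 1 ≤ p < ∞), f ≡ 1 on (1/2,1)×(0,1) and f ≡ 0 on (1/2,1)×(−1,0), such that for every 1 ≤ p < ∞ and every s ∈ (0,1) with sp > 1, ∫_Ω ∫_Ω |f(x)−f(y)|^p / |x−y|^{2+sp} dy dx = ∞; i.e. f ∈ W^{1,p}(Ω) but f ∉ W^{s,p}(Ω) for s > 1/p. -/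
open MeasureTheory ENNReal

noncomputable section

/-- The slit square `Ω = (-1,1)² \ ((0,1) × {0}) ⊆ ℝ²`. -/
def slitSquare : Set (EuclideanSpace ℝ (Fin 2)) :=
  {x | x 0 ∈ Set.Ioo (-1 : ℝ) 1 ∧ x 1 ∈ Set.Ioo (-1 : ℝ) 1} \
    {x | x 0 ∈ Set.Ioo (0 : ℝ) 1 ∧ x 1 = 0}

/-!
Let `f` be `1` above and `0` below the slit near its right end, cut off smoothly to `0` before
`x 0 = 0`, so that `f` is smooth on `Ω` (which contains the rest of the axis). For `x` at height
`t` above the slit, the `t × t` square just below the slit and to the right of `x` lies in `Ω`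
within distance `3t` of `x`, and `|f x - f y| = 1` on it. So the inner integral is at least
`t² (3t)^{-(2+sp)} ∼ t^{-sp}`, which is not integrable near `t = 0` once `sp ≥ 1`.
-/

namespace SlitSquare

open Set Filter

def coordEquiv : EuclideanSpace ℝ (Fin 2) ≃ᵐ ℝ × ℝ :=
  (MeasurableEquiv.toLp 2 (Fin 2 → ℝ)).symm.trans MeasurableEquiv.finTwoArrow

lemma measurePreserving_coordEquiv : MeasurePreserving coordEquiv :=
  (EuclideanSpace.volume_preserving_symm_measurableEquiv_toLp (Fin 2)).trans
    (volume_preserving_finTwoArrow ℝ)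

lemma coordEquiv_preimage_prod (s t : Set ℝ) :
    coordEquiv ⁻¹' (s ×ˢ t) = {x | x 0 ∈ s ∧ x 1 ∈ t} := rfl

lemma measurableSet_coord_mem {s t : Set ℝ} (hs : MeasurableSet s) (ht : MeasurableSet t) :
    MeasurableSet {x : EuclideanSpace ℝ (Fin 2) | x 0 ∈ s ∧ x 1 ∈ t} :=
  coordEquiv.measurable (hs.prod ht)

lemma volume_coord_mem (s t : Set ℝ) :
    volume {x : EuclideanSpace ℝ (Fin 2) | x 0 ∈ s ∧ x 1 ∈ t} = volume s * volume t := by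
  rw [← coordEquiv_preimage_prod, measurePreserving_coordEquiv.measure_preimage_equiv,
    Measure.volume_eq_prod, Measure.prod_prod]

lemma setLIntegral_coord_mem (s t : Set ℝ) {g : ℝ → ℝ≥0∞} (hg : Measurable g) :
    ∫⁻ x in {x : EuclideanSpace ℝ (Fin 2) | x 0 ∈ s ∧ x 1 ∈ t}, g (x 1)
      = volume s * ∫⁻ u in t, g u := by
  change ∫⁻ x in coordEquiv ⁻¹' (s ×ˢ t), g (coordEquiv x).2 = _
  rw [measurePreserving_coordEquiv.setLIntegral_comp_preimage_emb
      coordEquiv.measurableEmbedding (fun w => g w.2),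
    Measure.volume_eq_prod,
    setLIntegral_prod (fun w => g w.2) (hg.comp measurable_snd).aemeasurable]
  dsimp only
  rw [setLIntegral_const, mul_comm]

lemma lintegral_rpow_Ioo_eq_top {q c : ℝ} (hq : q ≤ -1) (hc : 0 < c) :
    ∫⁻ t in Ioo 0 c, ENNReal.ofReal (t ^ q) = ⊤ := by
  by_contra h
  have hint : IntegrableOn (fun t : ℝ => t ^ q) (Ioo 0 c) :=
    (lintegral_ofReal_ne_top_iff_integrable (by fun_prop)
      ((ae_restrict_mem measurableSet_Ioo).mono fun t ht => Real.rpow_nonneg ht.1.le q)).1 h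
  linarith [(intervalIntegral.integrableOn_Ioo_rpow_iff hc).1 hint]

lemma dist_le_three_mul {x y : EuclideanSpace ℝ (Fin 2)}
    (hy₀ : y 0 ∈ Ioo (x 0) (x 0 + x 1)) (hy₁ : y 1 ∈ Ioo (-x 1) 0) : dist x y ≤ 3 * x 1 := by
  rw [EuclideanSpace.dist_eq, Fin.sum_univ_two, Real.sqrt_le_iff, Real.dist_eq, Real.dist_eq,
    sq_abs, sq_abs]
  constructor <;> nlinarith [hy₀.1, hy₀.2, hy₁.1, hy₁.2]

lemma ofReal_rpow_le_lintegral_of_jump {Ω : Set (EuclideanSpace ℝ (Fin 2))}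
    {f : EuclideanSpace ℝ (Fin 2) → ℝ} {p σ : ℝ} (hσ : -2 ≤ σ) {x : EuclideanSpace ℝ (Fin 2)}
    (hx : 0 < x 1) (hΩ : {y | y 0 ∈ Ioo (x 0) (x 0 + x 1) ∧ y 1 ∈ Ioo (-x 1) 0} ⊆ Ω)
    (hfx : f x = 1) (hfy : ∀ y, y 0 ∈ Ioo (x 0) (x 0 + x 1) → y 1 ∈ Ioo (-x 1) 0 → f y = 0) :
    ENNReal.ofReal (3 ^ (-(2 + σ))) * ENNReal.ofReal (x 1 ^ (-σ))
      ≤ ∫⁻ y in Ω, ENNReal.ofReal (|f x - f y| ^ p / dist x y ^ (2 + σ)) := by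
  set t := x 1
  set B := {y : EuclideanSpace ℝ (Fin 2) | y 0 ∈ Ioo (x 0) (x 0 + t) ∧ y 1 ∈ Ioo (-t) 0}
  have hvol : volume B = ENNReal.ofReal t * ENNReal.ofReal t := by
    rw [volume_coord_mem, Real.volume_Ioo, Real.volume_Ioo, add_sub_cancel_left, zero_sub,
      neg_neg]
  have hconst : 3 ^ (-(2 + σ)) * t ^ (-σ) = (3 * t) ^ (-(2 + σ)) * (t * t) := by
    rw [Real.mul_rpow (by norm_num) hx.le, show -σ = -(2 + σ) + 2 by ring,
      Real.rpow_add hx, Real.rpow_two]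
    ring
  have hpoint : ∀ y ∈ B, ENNReal.ofReal ((3 * t) ^ (-(2 + σ)))
      ≤ ENNReal.ofReal (|f x - f y| ^ p / dist x y ^ (2 + σ)) := by
    rintro y ⟨hy₀, hy₁⟩
    have hdist_pos : 0 < dist x y := dist_pos.2 (ne_of_apply_ne (· 1) (hy₁.2.trans hx).ne')
    rw [hfx, hfy y hy₀ hy₁, sub_zero, abs_one, Real.one_rpow, one_div, ← Real.rpow_neg
      hdist_pos.le]
    exact ENNReal.ofReal_le_ofReal (Real.rpow_le_rpow_of_nonpos hdist_pos
      (dist_le_three_mul hy₀ hy₁) (by linarith))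
  calc ENNReal.ofReal (3 ^ (-(2 + σ))) * ENNReal.ofReal (t ^ (-σ))
      = ∫⁻ _ in B, ENNReal.ofReal ((3 * t) ^ (-(2 + σ))) := by
        rw [← ENNReal.ofReal_mul (by positivity), hconst, setLIntegral_const, hvol,
          ← ENNReal.ofReal_mul hx.le, ENNReal.ofReal_mul (by positivity)]
    _ ≤ ∫⁻ y in B, ENNReal.ofReal (|f x - f y| ^ p / dist x y ^ (2 + σ)) :=
        setLIntegral_mono' (measurableSet_coord_mem measurableSet_Ioo measurableSet_Ioo) hpoint
    _ ≤ _ := lintegral_mono_set hΩ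

theorem lintegral_gagliardo_eq_top_of_jump {Ω : Set (EuclideanSpace ℝ (Fin 2))}
    {f : EuclideanSpace ℝ (Fin 2) → ℝ} {a b h p σ : ℝ} (hh : 0 < h) (hab : a + 2 * h ≤ b)
    (hσ : 1 ≤ σ)
    (hΩ_upper : {x | x 0 ∈ Ioo a b ∧ x 1 ∈ Ioo 0 h} ⊆ Ω)
    (hΩ_lower : {x | x 0 ∈ Ioo a b ∧ x 1 ∈ Ioo (-h) 0} ⊆ Ω)
    (hf_upper : ∀ x, x 0 ∈ Ioo a b → x 1 ∈ Ioo 0 h → f x = 1)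
    (hf_lower : ∀ x, x 0 ∈ Ioo a b → x 1 ∈ Ioo (-h) 0 → f x = 0) :
    ∫⁻ x in Ω, ∫⁻ y in Ω, ENNReal.ofReal (|f x - f y| ^ p / dist x y ^ (2 + σ)) = ⊤ := by
  set A := {x : EuclideanSpace ℝ (Fin 2) | x 0 ∈ Ioo a (a + h) ∧ x 1 ∈ Ioo 0 h}
  have hA_sub : A ⊆ {x | x 0 ∈ Ioo a b ∧ x 1 ∈ Ioo 0 h} := fun x ⟨hx₀, hx₁⟩ =>
    ⟨⟨hx₀.1, by linarith [hx₀.2]⟩, hx₁⟩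
  have hbelow : ∀ x ∈ A,
      {y : EuclideanSpace ℝ (Fin 2) | y 0 ∈ Ioo (x 0) (x 0 + x 1) ∧ y 1 ∈ Ioo (-x 1) 0}
        ⊆ {y | y 0 ∈ Ioo a b ∧ y 1 ∈ Ioo (-h) 0} := by
    rintro x ⟨hx₀, hx₁⟩ y ⟨hy₀, hy₁⟩
    exact ⟨⟨by linarith [hx₀.1, hy₀.1], by linarith [hx₀.2, hx₁.2, hy₀.2]⟩,
      ⟨by linarith [hx₁.2, hy₁.1], hy₁.2⟩⟩
  have hinner : ∀ x ∈ A, ENNReal.ofReal (3 ^ (-(2 + σ))) * ENNReal.ofReal (x 1 ^ (-σ))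
      ≤ ∫⁻ y in Ω, ENNReal.ofReal (|f x - f y| ^ p / dist x y ^ (2 + σ)) := fun x hx =>
    ofReal_rpow_le_lintegral_of_jump (by linarith) hx.2.1 ((hbelow x hx).trans hΩ_lower)
      (hf_upper x (hA_sub hx).1 hx.2) fun y hy₀ hy₁ =>
        hf_lower y (hbelow x hx ⟨hy₀, hy₁⟩).1 (hbelow x hx ⟨hy₀, hy₁⟩).2
  have hA_top :
      ∫⁻ x in A, ENNReal.ofReal (3 ^ (-(2 + σ))) * ENNReal.ofReal (x 1 ^ (-σ)) = ⊤ := by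
    rw [setLIntegral_coord_mem _ _
        (g := fun u => ENNReal.ofReal (3 ^ (-(2 + σ))) * ENNReal.ofReal (u ^ (-σ))) (by fun_prop),
      lintegral_const_mul' _ _ ENNReal.ofReal_ne_top,
      lintegral_rpow_Ioo_eq_top (by linarith) hh, Real.volume_Ioo, add_sub_cancel_left,
      ENNReal.mul_top (by positivity), ENNReal.mul_top (by positivity)]
  refine eq_top_iff.2 (hA_top.symm.le.trans ?_)
  exact (setLIntegral_mono' (measurableSet_coord_mem measurableSet_Ioo measurableSet_Ioo)
    hinner).trans (lintegral_mono_set (hA_sub.trans hΩ_upper))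

lemma norm_fderiv_comp_apply_le {ι : Type*} [Fintype ι] {g : ℝ → ℝ} {x : EuclideanSpace ℝ ι}
    (i : ι) (hg : DifferentiableAt ℝ g (x i)) :
    ‖fderiv ℝ (fun y : EuclideanSpace ℝ ι => g (y i)) x‖ ≤ ‖deriv g (x i)‖ := by
  have hproj : ‖EuclideanSpace.proj (𝕜 := ℝ) i‖ ≤ 1 :=
    ContinuousLinearMap.opNorm_le_bound _ zero_le_one fun y => by
      simpa using PiLp.norm_apply_le y i
  change ‖fderiv ℝ (g ∘ EuclideanSpace.proj (𝕜 := ℝ) i) x‖ ≤ _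
  rw [fderiv_comp x hg (EuclideanSpace.proj (𝕜 := ℝ) i).differentiableAt,
    (EuclideanSpace.proj (𝕜 := ℝ) i).fderiv, norm_deriv_eq_norm_fderiv]
  exact (ContinuousLinearMap.opNorm_comp_le _ _).trans
    (mul_le_of_le_one_right (norm_nonneg _) hproj)

def cutoff (t : ℝ) : ℝ := Real.smoothTransition (4 * t - 1)

lemma contDiff_cutoff : ContDiff ℝ 1 cutoff := by
  unfold cutoff; fun_prop

lemma cutoff_of_le {t : ℝ} (ht : t ≤ 1 / 4) : cutoff t = 0 :=
  Real.smoothTransition.zero_of_nonpos (by linarith)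

lemma cutoff_of_ge {t : ℝ} (ht : 1 / 2 ≤ t) : cutoff t = 1 :=
  Real.smoothTransition.one_of_one_le (by linarith)

lemma abs_cutoff_le_one (t : ℝ) : |cutoff t| ≤ 1 := by
  unfold cutoff
  rw [abs_of_nonneg (Real.smoothTransition.nonneg _)]
  exact Real.smoothTransition.le_one _

/-- The cutoff makes `slitStep` vanish near `{x | x 1 = 0 ∧ x 0 ≤ 0}`, the part of the axis
inside `slitSquare`, so the jump across `x 1 = 0` only happens along the slit. -/
def slitStep (x : EuclideanSpace ℝ (Fin 2)) : ℝ := if 0 < x 1 then cutoff (x 0) else 0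

lemma slitStep_of_pos {x : EuclideanSpace ℝ (Fin 2)} (hx₀ : 1 / 2 ≤ x 0) (hx₁ : 0 < x 1) :
    slitStep x = 1 := by
  rw [slitStep, if_pos hx₁, cutoff_of_ge hx₀]

lemma slitStep_of_nonpos {x : EuclideanSpace ℝ (Fin 2)} (hx₁ : x 1 ≤ 0) : slitStep x = 0 :=
  if_neg hx₁.not_gt

lemma abs_slitStep_le_one (x : EuclideanSpace ℝ (Fin 2)) : |slitStep x| ≤ 1 := by
  unfold slitStep; split_ifs <;> simp [abs_cutoff_le_one]

lemma slitStep_eventuallyEq {x : EuclideanSpace ℝ (Fin 2)} (hx : x ∈ slitSquare) :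
    slitStep =ᶠ[nhds x] (fun y => cutoff (y 0)) ∨ slitStep =ᶠ[nhds x] (fun _ => 0) := by
  have hcont (i : Fin 2) : Continuous fun y : EuclideanSpace ℝ (Fin 2) => y i := by fun_prop
  rcases lt_trichotomy (x 1) 0 with hneg | hzero | hpos
  · right
    filter_upwards [(isOpen_lt (hcont 1) continuous_const).mem_nhds hneg] with y hy
    exact slitStep_of_nonpos (le_of_lt hy)
  · right
    have hx₀ : x 0 ≤ 0 := by
      by_contra! hx₀
      exact hx.2 ⟨⟨hx₀, hx.1.1.2⟩, hzero⟩
    filter_upwards [(isOpen_lt (hcont 0) continuous_const).mem_nhds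
      (show x 0 < 1 / 4 by linarith)] with y hy
    unfold slitStep; split_ifs <;> simp [cutoff_of_le (le_of_lt hy)]
  · left
    filter_upwards [(isOpen_lt continuous_const (hcont 1)).mem_nhds hpos] with y hy
    exact if_pos hy

lemma differentiableAt_slitStep {x : EuclideanSpace ℝ (Fin 2)} (hx : x ∈ slitSquare) :
    DifferentiableAt ℝ slitStep x := by
  have hcutoff : Differentiable ℝ cutoff := contDiff_cutoff.differentiable one_ne_zero
  rcases slitStep_eventuallyEq hx with h | h
  · exact (show DifferentiableAt ℝ (fun y : EuclideanSpace ℝ (Fin 2) => cutoff (y 0)) x by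
      fun_prop).congr_of_eventuallyEq h
  · exact (differentiableAt_const _).congr_of_eventuallyEq h

lemma exists_norm_fderiv_slitStep_le :
    ∃ M : ℝ, ∀ x ∈ slitSquare, ‖fderiv ℝ slitStep x‖ ≤ M := by
  obtain ⟨M, hM⟩ := isCompact_Icc.exists_bound_of_continuousOn
    ((contDiff_cutoff.continuous_deriv le_rfl).continuousOn (s := Icc (-1 : ℝ) 1))
  refine ⟨max M 0, fun x hx => ?_⟩
  rcases slitStep_eventuallyEq hx with h | h
  · rw [h.fderiv_eq]
    exact (norm_fderiv_comp_apply_le 0 (contDiff_cutoff.differentiable one_ne_zero _)).trans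
      ((hM _ ⟨hx.1.1.1.le, hx.1.1.2.le⟩).trans (le_max_left _ _))
  · simp [h.fderiv_eq]

lemma setOf_coord_mem_subset_slitSquare {a b c d : ℝ} (ha : -1 ≤ a) (hb : b ≤ 1) (hc : -1 ≤ c)
    (hd : d ≤ 1) (hcd : 0 ≤ c ∨ d ≤ 0) :
    {x : EuclideanSpace ℝ (Fin 2) | x 0 ∈ Ioo a b ∧ x 1 ∈ Ioo c d} ⊆ slitSquare := by
  rintro x ⟨hx₀, hx₁⟩
  refine ⟨⟨⟨by linarith [hx₀.1], by linarith [hx₀.2]⟩,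
    ⟨by linarith [hx₁.1], by linarith [hx₁.2]⟩⟩, fun ⟨_, hx⟩ => ?_⟩
  rcases hcd with hc | hd <;> linarith [hx₁.1, hx₁.2]

end SlitSquare

open SlitSquare in
/-- There is a function `f` on the slit square, differentiable with
`‖f‖_∞ ≤ 1` and bounded gradient (hence in `W^{1,p}` for all `p`), equal to `1` on
`(1/2,1)×(0,1)` and to `0` on `(1/2,1)×(-1,0)`, such that for all `1 ≤ p < ∞` and
`s ∈ (0,1)` with `sp > 1`, the fractional seminorm
`∫_Ω ∫_Ω |f(x)-f(y)|^p/|x-y|^{2+sp} dy dx` is infinite; i.e. `f ∈ W^{1,p}(Ω)` but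
`f ∉ W^{s,p}(Ω)` for `s > 1/p`. -/
theorem slit_square_W1p_not_Wsp :
    ∃ f : EuclideanSpace ℝ (Fin 2) → ℝ,
      (∀ x ∈ slitSquare, DifferentiableAt ℝ f x) ∧
      (∀ x ∈ slitSquare, |f x| ≤ 1) ∧
      (∃ M : ℝ, ∀ x ∈ slitSquare, ‖fderiv ℝ f x‖ ≤ M) ∧
      (∀ x : EuclideanSpace ℝ (Fin 2),
        x 0 ∈ Set.Ioo (1 / 2 : ℝ) 1 → x 1 ∈ Set.Ioo (0 : ℝ) 1 → f x = 1) ∧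
      (∀ x : EuclideanSpace ℝ (Fin 2),
        x 0 ∈ Set.Ioo (1 / 2 : ℝ) 1 → x 1 ∈ Set.Ioo (-1 : ℝ) 0 → f x = 0) ∧
      ∀ p s : ℝ, 1 ≤ p → 0 < s → s < 1 → 1 < s * p →
        (∫⁻ x in slitSquare, ∫⁻ y in slitSquare,
            ENNReal.ofReal (|f x - f y| ^ p / dist x y ^ ((2 : ℝ) + s * p))) = ⊤ := by
  have upper : ∀ x : EuclideanSpace ℝ (Fin 2), x 0 ∈ Set.Ioo (1 / 2 : ℝ) 1 → 0 < x 1 →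
      slitStep x = 1 := fun x hx₀ hx₁ => slitStep_of_pos hx₀.1.le hx₁
  refine ⟨slitStep, fun x hx => differentiableAt_slitStep hx, fun x _ => abs_slitStep_le_one x,
    exists_norm_fderiv_slitStep_le, fun x hx₀ hx₁ => upper x hx₀ hx₁.1,
    fun x _ hx₁ => slitStep_of_nonpos hx₁.2.le, fun p s _ _ _ hsp => ?_⟩
  exact lintegral_gagliardo_eq_top_of_jump (h := 1 / 4) (by norm_num) (by norm_num) hsp.le
    (setOf_coord_mem_subset_slitSquare (by norm_num) le_rfl (by norm_num) (by norm_num)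
      (.inl le_rfl))
    (setOf_coord_mem_subset_slitSquare (by norm_num) le_rfl (by norm_num) (by norm_num)
      (.inr le_rfl))
    (fun x hx₀ hx₁ => upper x hx₀ hx₁.1) fun x _ hx₁ => slitStep_of_nonpos hx₁.2.le

end
end

section
/- Let Ω = (−1,1)² ∖ ((0,1)×{0}) ⊂ ℝ², let 1 ≤ p < ∞ and s ∈ (0,1) with sp > 1. If f : Ω → ℝ is any measurable function with f = 1 almost everywhere on (1/2,1)×(0,1) and f = 0 almost everywhere on (1/2,1)×(−1,0), then ∫_Ω ∫_Ω |f(x)−f(y)|^p / |x−y|^{2+sp} dy dx = ∞. -/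
/-!
Near the half-slit `(1/2,1) × {0}` the function jumps from `1` to `0`, so the seminorm is at
least `∫_A ∫_B |x - y|^{-e}` with `A`, `B` the rectangles above and below it and `e = 2 + sp > 3`.
A point of `A` at height `x₁ < w` sees a `w × w` square of `B` within distance `3w`, so the
inner integral is at least `w² (3w)^{-e}`; integrating over the strip of height `w` gives
`w³ (3w)^{-e} / 4 ≍ w^{3-e}`, which is unbounded as `w → 0`.
-/

open MeasureTheory ENNReal

open Set Filter Topology

def rect (a b c d : ℝ) : Set (EuclideanSpace ℝ (Fin 2)) :=
  {x | x 0 ∈ Ioo a b ∧ x 1 ∈ Ioo c d}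

lemma rect_eq_preimage (a b c d : ℝ) :
    rect a b c d =
      (MeasurableEquiv.toLp 2 (Fin 2 → ℝ)).symm ⁻¹' univ.pi ![Ioo a b, Ioo c d] := by
  ext x
  simp [rect, Fin.forall_fin_two]

lemma measurableSet_rect (a b c d : ℝ) : MeasurableSet (rect a b c d) := by
  rw [rect_eq_preimage]
  exact (MeasurableEquiv.measurable _) <|
    MeasurableSet.univ_pi fun i => by fin_cases i <;> exact measurableSet_Ioo

lemma volume_rect (a b c d : ℝ) :
    volume (rect a b c d) = ENNReal.ofReal (b - a) * ENNReal.ofReal (d - c) := by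
  rw [rect_eq_preimage,
    (EuclideanSpace.volume_preserving_symm_measurableEquiv_toLp (Fin 2)).measure_preimage
      (MeasurableSet.univ_pi fun i => by fin_cases i <;> exact measurableSet_Ioo).nullMeasurableSet,
    volume_pi_pi]
  simp [Fin.prod_univ_two, Real.volume_Ioo]

lemma rect_subset_slitSquare {a b c d : ℝ} (ha : -1 ≤ a) (hb : b ≤ 1) (hc : -1 ≤ c)
    (hd : d ≤ 1) (hcd : 0 ≤ c ∨ d ≤ 0) : rect a b c d ⊆ slitSquare := by
  rintro x ⟨⟨hxa, hxb⟩, hxc, hxd⟩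
  refine ⟨⟨⟨by linarith, by linarith⟩, by linarith, by linarith⟩, fun h => ?_⟩
  rcases hcd with hc0 | hd0 <;> linarith [h.2]

lemma EuclideanSpace.dist_le_of_abs_sub_le {x y : EuclideanSpace ℝ (Fin 2)} {r₀ r₁ : ℝ}
    (h₀ : |x 0 - y 0| ≤ r₀) (h₁ : |x 1 - y 1| ≤ r₁) : dist x y ≤ r₀ + r₁ := by
  rw [EuclideanSpace.dist_eq, Fin.sum_univ_two, Real.dist_eq, Real.dist_eq, sq_abs, sq_abs,
    Real.sqrt_le_iff]
  have := abs_nonneg (x 0 - y 0)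
  have := abs_nonneg (x 1 - y 1)
  constructor
  · linarith
  · nlinarith [sq_abs (x 0 - y 0), sq_abs (x 1 - y 1)]

lemma ofReal_le_lintegral_inv_dist_rpow {e w : ℝ} (he : 0 ≤ e) (hw : w ≤ 1 / 4)
    {x : EuclideanSpace ℝ (Fin 2)} (hx : x ∈ rect (1 / 2) (3 / 4) 0 w) :
    ENNReal.ofReal (w ^ 2 / (3 * w) ^ e) ≤
      ∫⁻ y in rect (1 / 2) 1 (-1) 0, ENNReal.ofReal (1 / dist x y ^ e) := by
  obtain ⟨⟨hx0, hx0'⟩, hx1, hx1'⟩ := hx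
  have hw0 : 0 < w := hx1.trans hx1'
  set T := rect (x 0) (x 0 + w) (-w) 0
  have hTB : T ⊆ rect (1 / 2) 1 (-1) 0 := fun y ⟨⟨hy0, hy0'⟩, hy1, hy1'⟩ =>
    ⟨⟨by linarith, by linarith⟩, by linarith, hy1'⟩
  have hkernel : ∀ y ∈ T, ENNReal.ofReal (1 / (3 * w) ^ e) ≤ ENNReal.ofReal (1 / dist x y ^ e) := by
    rintro y ⟨⟨hy0, hy0'⟩, hy1, hy1'⟩
    have hpos : 0 < dist x y := dist_pos.2 fun h => by rw [h] at hx1; linarith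
    have hle : dist x y ≤ 3 * w := by
      have := EuclideanSpace.dist_le_of_abs_sub_le (x := x) (y := y) (r₀ := w) (r₁ := 2 * w)
        (abs_sub_le_iff.2 ⟨by linarith, by linarith⟩) (abs_sub_le_iff.2 ⟨by linarith, by linarith⟩)
      linarith
    gcongr
  calc ENNReal.ofReal (w ^ 2 / (3 * w) ^ e)
      = ENNReal.ofReal (1 / (3 * w) ^ e) * volume T := by
        rw [volume_rect, ← ENNReal.ofReal_mul (by linarith), ← ENNReal.ofReal_mul (by positivity)]
        congr 1
        ring
    _ = ∫⁻ _ in T, ENNReal.ofReal (1 / (3 * w) ^ e) := (setLIntegral_const _ _).symm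
    _ ≤ ∫⁻ y in T, ENNReal.ofReal (1 / dist x y ^ e) :=
        setLIntegral_mono' (measurableSet_rect _ _ _ _) hkernel
    _ ≤ _ := lintegral_mono_set hTB

lemma ofReal_le_lintegral_lintegral_inv_dist_rpow {e w : ℝ} (he : 0 ≤ e) (hw0 : 0 < w)
    (hw : w ≤ 1 / 4) :
    ENNReal.ofReal (w ^ 3 / (4 * (3 * w) ^ e)) ≤
      ∫⁻ x in rect (1 / 2) 1 0 1, ∫⁻ y in rect (1 / 2) 1 (-1) 0,
        ENNReal.ofReal (1 / dist x y ^ e) := by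
  have hstrip : rect (1 / 2) (3 / 4) 0 w ⊆ rect (1 / 2) 1 0 1 := fun x ⟨⟨h0, h0'⟩, h1, h1'⟩ =>
    ⟨⟨h0, by linarith⟩, h1, by linarith⟩
  calc ENNReal.ofReal (w ^ 3 / (4 * (3 * w) ^ e))
      = ENNReal.ofReal (w ^ 2 / (3 * w) ^ e) * volume (rect (1 / 2) (3 / 4) 0 w) := by
        rw [volume_rect, ← ENNReal.ofReal_mul (by norm_num), ← ENNReal.ofReal_mul (by positivity)]
        congr 1
        ring
    _ = ∫⁻ _ in rect (1 / 2) (3 / 4) 0 w, ENNReal.ofReal (w ^ 2 / (3 * w) ^ e) :=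
        (setLIntegral_const _ _).symm
    _ ≤ ∫⁻ x in rect (1 / 2) (3 / 4) 0 w, ∫⁻ y in rect (1 / 2) 1 (-1) 0,
          ENNReal.ofReal (1 / dist x y ^ e) :=
        setLIntegral_mono' (measurableSet_rect _ _ _ _) fun x hx =>
          ofReal_le_lintegral_inv_dist_rpow he hw hx
    _ ≤ _ := lintegral_mono_set hstrip

lemma tendsto_cube_div_rpow_nhdsGT_zero {e : ℝ} (he : 3 < e) :
    Tendsto (fun w : ℝ => w ^ 3 / (4 * (3 * w) ^ e)) (𝓝[>] 0) atTop := by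
  have hlim := (tendsto_rpow_neg_nhdsGT_zero (by linarith : 3 - e < 0)).const_mul_atTop
    (by positivity : (0 : ℝ) < 1 / (4 * 3 ^ e))
  refine hlim.congr' (eventually_nhdsWithin_of_forall fun w (hw : 0 < w) => ?_)
  dsimp only
  rw [Real.rpow_sub hw, Real.mul_rpow (by norm_num) hw.le, Real.rpow_ofNat]
  field_simp

lemma lintegral_lintegral_inv_dist_rpow_eq_top {e : ℝ} (he : 3 < e) :
    ∫⁻ x in rect (1 / 2) 1 0 1, ∫⁻ y in rect (1 / 2) 1 (-1) 0,
      ENNReal.ofReal (1 / dist x y ^ e) = ⊤ := by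
  refine top_le_iff.1 <| le_of_tendsto
    (ENNReal.tendsto_ofReal_atTop.comp (tendsto_cube_div_rpow_nhdsGT_zero he)) ?_
  filter_upwards [Ioo_mem_nhdsGT (by norm_num : (0 : ℝ) < 1 / 4)] with w hw
  exact ofReal_le_lintegral_lintegral_inv_dist_rpow (by linarith) hw.1 hw.2.le

theorem slit_square_seminorm_infinite_general
    (p s : ℝ) (hsp : 1 < s * p)
    (f : EuclideanSpace ℝ (Fin 2) → ℝ)
    (hone : ∀ᵐ x ∂(volume.restrict
      {x : EuclideanSpace ℝ (Fin 2) |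
        x 0 ∈ Set.Ioo (1 / 2 : ℝ) 1 ∧ x 1 ∈ Set.Ioo (0 : ℝ) 1}), f x = 1)
    (hzero : ∀ᵐ x ∂(volume.restrict
      {x : EuclideanSpace ℝ (Fin 2) |
        x 0 ∈ Set.Ioo (1 / 2 : ℝ) 1 ∧ x 1 ∈ Set.Ioo (-1 : ℝ) 0}), f x = 0) :
    (∫⁻ x in slitSquare, ∫⁻ y in slitSquare,
        ENNReal.ofReal (|f x - f y| ^ p / dist x y ^ ((2 : ℝ) + s * p))) = ⊤ := by
  have hA : rect (1 / 2) 1 0 1 ⊆ slitSquare :=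
    rect_subset_slitSquare (by norm_num) le_rfl (by norm_num) le_rfl (.inl le_rfl)
  have hB : rect (1 / 2) 1 (-1) 0 ⊆ slitSquare :=
    rect_subset_slitSquare (by norm_num) le_rfl le_rfl (by norm_num) (.inr le_rfl)
  refine eq_top_mono ?_ (lintegral_lintegral_inv_dist_rpow_eq_top (by linarith : 3 < 2 + s * p))
  calc ∫⁻ x in rect (1 / 2) 1 0 1, ∫⁻ y in rect (1 / 2) 1 (-1) 0,
        ENNReal.ofReal (1 / dist x y ^ (2 + s * p))
      = ∫⁻ x in rect (1 / 2) 1 0 1, ∫⁻ y in rect (1 / 2) 1 (-1) 0,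
          ENNReal.ofReal (|f x - f y| ^ p / dist x y ^ (2 + s * p)) := by
        refine lintegral_congr_ae ?_
        filter_upwards [hone] with x hx
        refine lintegral_congr_ae ?_
        filter_upwards [hzero] with y hy
        simp [hx, hy]
    _ ≤ _ := (lintegral_mono_set hA).trans (lintegral_mono fun x => lintegral_mono_set hB)

/-- For the slit square `Ω`, `1 ≤ p < ∞`, `s ∈ (0,1)` with `sp > 1`:
any measurable `f` with `f = 1` a.e. on `(1/2,1)×(0,1)` and `f = 0` a.e. on
`(1/2,1)×(-1,0)` has infinite fractional seminorm
`∫_Ω ∫_Ω |f(x)-f(y)|^p/|x-y|^{2+sp} dy dx = ∞`. -/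
theorem slit_square_seminorm_infinite
    (p s : ℝ) (hp : 1 ≤ p) (hs0 : 0 < s) (hs1 : s < 1) (hsp : 1 < s * p)
    (f : EuclideanSpace ℝ (Fin 2) → ℝ) (hf : Measurable f)
    (hone : ∀ᵐ x ∂(volume.restrict
      {x : EuclideanSpace ℝ (Fin 2) |
        x 0 ∈ Set.Ioo (1 / 2 : ℝ) 1 ∧ x 1 ∈ Set.Ioo (0 : ℝ) 1}), f x = 1)
    (hzero : ∀ᵐ x ∂(volume.restrict
      {x : EuclideanSpace ℝ (Fin 2) |
        x 0 ∈ Set.Ioo (1 / 2 : ℝ) 1 ∧ x 1 ∈ Set.Ioo (-1 : ℝ) 0}), f x = 0) :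
    (∫⁻ x in slitSquare, ∫⁻ y in slitSquare,
        ENNReal.ofReal (|f x - f y| ^ p / dist x y ^ ((2 : ℝ) + s * p))) = ⊤ :=
  slit_square_seminorm_infinite_general p s hsp f hone hzero
end

section
/- Let Ω = (−1,1)² ∖ ((0,1)×{0}) ⊂ ℝ², let 1 ≤ p < ∞ and 1/p < s < 1. Then (L^p(Ω), W^{1,p}(Ω))_{s,p} ≠ W^{s,p}(Ω): there exists f ∈ L^p(Ω) with ∫₀^∞ (ℓ^{-s} K(ℓ,f))^p dℓ/ℓ < ∞ but ∫_Ω ∫_Ω |f(x)−f(y)|^p / |x−y|^{2+sp} dy dx = ∞. -/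
open MeasureTheory ENNReal

noncomputable section

/-- The `L^p` "norm" on `Ω`, valued in `ℝ≥0∞`. -/
def lpNorm (p : ℝ) (Ω : Set (EuclideanSpace ℝ (Fin 2)))
    (f : EuclideanSpace ℝ (Fin 2) → ℝ) : ℝ≥0∞ :=
  (∫⁻ x in Ω, ENNReal.ofReal (|f x| ^ p)) ^ (1 / p)

/-- The `L^p` norm of the gradient on `Ω`, valued in `ℝ≥0∞`. -/
def gradLpNorm (p : ℝ) (Ω : Set (EuclideanSpace ℝ (Fin 2)))
    (h : EuclideanSpace ℝ (Fin 2) → ℝ) : ℝ≥0∞ :=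
  (∫⁻ x in Ω, ENNReal.ofReal (‖fderiv ℝ h x‖ ^ p)) ^ (1 / p)

/-- The `K`-functional for the couple `(L^p(Ω), W^{1,p}(Ω))`. -/
def Kfunc (p : ℝ) (Ω : Set (EuclideanSpace ℝ (Fin 2)))
    (f : EuclideanSpace ℝ (Fin 2) → ℝ) (ℓ : ℝ) : ℝ≥0∞ :=
  ⨅ (g : EuclideanSpace ℝ (Fin 2) → ℝ) (h : EuclideanSpace ℝ (Fin 2) → ℝ)
    (_ : ∀ x ∈ Ω, f x = g x + h x) (_ : ∀ x ∈ Ω, DifferentiableAt ℝ h x),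
      lpNorm p Ω g + ENNReal.ofReal ℓ * (lpNorm p Ω h + gradLpNorm p Ω h)

/-- The `p`-th power of the real interpolation seminorm. -/
def interpSeminormP (p s : ℝ) (Ω : Set (EuclideanSpace ℝ (Fin 2)))
    (f : EuclideanSpace ℝ (Fin 2) → ℝ) : ℝ≥0∞ :=
  ∫⁻ ℓ in Set.Ioi (0 : ℝ),
    (ENNReal.ofReal (ℓ ^ (-s)) * Kfunc p Ω f ℓ) ^ p * ENNReal.ofReal ℓ⁻¹

/-!
Take `f = (x₀)₊²` above the slit and `f = 0` below it. Since `(x₀)₊²` vanishes to second order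
at the tip of the slit, `f` is differentiable on `Ω` with bounded gradient, so
`K(ℓ, f) ≤ min (‖f‖_p) (ℓ ‖f‖_{W^{1,p}})` and the interpolation integral converges for
`0 < s < 1`. Across `(1/2, 3/4) × {0}`, however, `f` jumps by at least `1/4`: a point at height
`t` above the slit sees this jump on a box of area `t²` at distance at most `3t`, so its inner
Gagliardo integral is at least a multiple of `t^(-sp)`, which is not integrable near `t = 0`
once `sp ≥ 1`.
-/

open Set Filter Topology

local notation "ℝ²" => EuclideanSpace ℝ (Fin 2)

lemma setLIntegral_ofReal_rpow_ne_top_iff {S : Set ℝ} (hS : MeasurableSet S) (hS0 : S ⊆ Ici 0)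
    (a : ℝ) :
    ∫⁻ t in S, ENNReal.ofReal (t ^ a) ≠ ⊤ ↔ IntegrableOn (fun t : ℝ => t ^ a) S :=
  lintegral_ofReal_ne_top_iff_integrable
    (measurable_id.pow_const a).aestronglyMeasurable
    ((ae_restrict_iff' hS).mpr (Eventually.of_forall fun _ ht => Real.rpow_nonneg (hS0 ht) a))

lemma setLIntegral_Ioc_rpow_lt_top {a : ℝ} (ha : -1 < a) :
    ∫⁻ t in Ioc (0 : ℝ) 1, ENNReal.ofReal (t ^ a) < ⊤ := by
  refine lt_top_iff_ne_top.mpr ((setLIntegral_ofReal_rpow_ne_top_iff measurableSet_Ioc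
    (fun _ ht => le_of_lt ht.1) a).mpr ?_)
  exact (intervalIntegrable_iff_integrableOn_Ioc_of_le zero_le_one).mp
    (intervalIntegral.intervalIntegrable_rpow' ha)

lemma setLIntegral_Ioi_rpow_lt_top {a : ℝ} (ha : a < -1) :
    ∫⁻ t in Ioi (1 : ℝ), ENNReal.ofReal (t ^ a) < ⊤ :=
  lt_top_iff_ne_top.mpr ((setLIntegral_ofReal_rpow_ne_top_iff measurableSet_Ioi
    (fun _ ht => mem_Ici.mpr (zero_le_one.trans (le_of_lt ht))) a).mpr
      (integrableOn_Ioi_rpow_of_lt ha one_pos))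

lemma setLIntegral_Ioo_rpow_eq_top {a c : ℝ} (ha : a ≤ -1) (hc : 0 < c) :
    ∫⁻ t in Ioo (0 : ℝ) c, ENNReal.ofReal (t ^ a) = ⊤ := by
  by_contra h
  have := (setLIntegral_ofReal_rpow_ne_top_iff measurableSet_Ioo
    (fun _ ht => le_of_lt ht.1) a).mp h
  rw [intervalIntegral.integrableOn_Ioo_rpow_iff hc] at this
  linarith

section Interpolation

variable {p s : ℝ}

lemma rpow_mul_weight_eq {ℓ : ℝ} (hℓ : 0 < ℓ) (C : ℝ≥0∞) (a : ℝ) (hp : 0 ≤ p) :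
    (ENNReal.ofReal (ℓ ^ a) * C) ^ p * ENNReal.ofReal ℓ⁻¹
      = C ^ p * ENNReal.ofReal (ℓ ^ (a * p - 1)) := by
  have hpow : ℓ ^ (a * p) * ℓ⁻¹ = ℓ ^ (a * p - 1) := by
    rw [← Real.rpow_neg_one ℓ, ← Real.rpow_add hℓ, sub_eq_add_neg]
  rw [ENNReal.mul_rpow_of_nonneg _ _ hp,
    ENNReal.ofReal_rpow_of_pos (Real.rpow_pos_of_pos hℓ _), ← Real.rpow_mul hℓ.le,
    mul_right_comm, ← ENNReal.ofReal_mul (Real.rpow_nonneg hℓ.le _), hpow, mul_comm]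

lemma setLIntegral_rpow_mul_weight_lt_top {S : Set ℝ} (hS : MeasurableSet S) (hS0 : S ⊆ Ioi 0)
    {a : ℝ} {C : ℝ≥0∞} (hC : C ≠ ⊤) (hp : 0 ≤ p)
    (hint : ∫⁻ ℓ in S, ENNReal.ofReal (ℓ ^ (a * p - 1)) < ⊤) :
    ∫⁻ ℓ in S, (ENNReal.ofReal (ℓ ^ a) * C) ^ p * ENNReal.ofReal ℓ⁻¹ < ⊤ := by
  rw [setLIntegral_congr_fun hS fun ℓ hℓ => rpow_mul_weight_eq (hS0 hℓ) C a hp,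
    lintegral_const_mul' _ _ (ENNReal.rpow_ne_top_of_nonneg hp hC)]
  exact ENNReal.mul_lt_top (ENNReal.rpow_lt_top_of_nonneg hp hC) hint

/-- The real interpolation integral is finite as soon as `F ℓ ≤ min A (ℓ B)`: the bound `ℓ B`
controls `ℓ ≤ 1` because `s < 1`, the bound `A` controls `ℓ ≥ 1` because `0 < s`. -/
lemma lintegral_interpolation_lt_top {F : ℝ → ℝ≥0∞} {A B : ℝ≥0∞} (hA : A ≠ ⊤) (hB : B ≠ ⊤)
    (hFA : ∀ ℓ, F ℓ ≤ A) (hFB : ∀ ℓ, F ℓ ≤ ENNReal.ofReal ℓ * B)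
    (hp : 0 < p) (hs0 : 0 < s) (hs1 : s < 1) :
    ∫⁻ ℓ in Ioi 0, (ENNReal.ofReal (ℓ ^ (-s)) * F ℓ) ^ p * ENNReal.ofReal ℓ⁻¹ < ⊤ := by
  rw [← Ioc_union_Ioi_eq_Ioi zero_le_one,
    lintegral_union measurableSet_Ioi (Ioc_disjoint_Ioi le_rfl)]
  refine ENNReal.add_lt_top.mpr ⟨?_, ?_⟩
  · refine (setLIntegral_mono' measurableSet_Ioc fun ℓ hℓ => ?_).trans_lt
      (setLIntegral_rpow_mul_weight_lt_top measurableSet_Ioc (fun ℓ hℓ => hℓ.1) hB hp.le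
        (setLIntegral_Ioc_rpow_lt_top (a := (1 - s) * p - 1) (by nlinarith)))
    have hℓ_eq : ENNReal.ofReal (ℓ ^ (-s)) * (ENNReal.ofReal ℓ * B)
        = ENNReal.ofReal (ℓ ^ (1 - s)) * B := by
      rw [← mul_assoc, ← ENNReal.ofReal_mul (Real.rpow_nonneg hℓ.1.le _), sub_eq_neg_add,
        Real.rpow_add hℓ.1, Real.rpow_one]
    gcongr ?_ ^ p * _
    exact (mul_le_mul_right (hFB ℓ) _).trans_eq hℓ_eq
  · refine (setLIntegral_mono' measurableSet_Ioi fun ℓ _ => ?_).trans_lt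
      (setLIntegral_rpow_mul_weight_lt_top measurableSet_Ioi
        (fun ℓ hℓ => mem_Ioi.mpr (zero_lt_one.trans hℓ)) hA hp.le
        (setLIntegral_Ioi_rpow_lt_top (a := -s * p - 1) (by nlinarith)))
    gcongr ?_ ^ p * _
    exact mul_le_mul_right (hFA ℓ) _

end Interpolation

section KFunctional

variable {p : ℝ} {Ω : Set (ℝ²)}

lemma rpow_setLIntegral_ofReal_rpow_lt_top {F : ℝ² → ℝ} {C : ℝ}
    (hp : 0 < p) (hΩ : volume Ω ≠ ⊤) (hF : ∀ x ∈ Ω, 0 ≤ F x ∧ F x ≤ C) :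
    (∫⁻ x in Ω, ENNReal.ofReal (F x ^ p)) ^ (1 / p) < ⊤ := by
  refine ENNReal.rpow_lt_top_of_nonneg (by positivity)
    (setLIntegral_lt_top_of_le_nnreal hΩ ⟨(C ^ p).toNNReal, fun x hx => ?_⟩).ne
  rw [ENNReal.ofNNReal_toNNReal]
  exact ENNReal.ofReal_le_ofReal (Real.rpow_le_rpow (hF x hx).1 (hF x hx).2 hp.le)

lemma lpNorm_lt_top_of_abs_le {g : ℝ² → ℝ} {C : ℝ} (hp : 0 < p)
    (hΩ : volume Ω ≠ ⊤) (hg : ∀ x ∈ Ω, |g x| ≤ C) : _root_.lpNorm p Ω g < ⊤ :=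
  rpow_setLIntegral_ofReal_rpow_lt_top hp hΩ fun x hx => ⟨abs_nonneg _, hg x hx⟩

lemma gradLpNorm_lt_top_of_norm_fderiv_le {h : ℝ² → ℝ} {C : ℝ}
    (hp : 0 < p) (hΩ : volume Ω ≠ ⊤) (hh : ∀ x ∈ Ω, ‖fderiv ℝ h x‖ ≤ C) :
    gradLpNorm p Ω h < ⊤ :=
  rpow_setLIntegral_ofReal_rpow_lt_top hp hΩ fun x hx => ⟨norm_nonneg _, hh x hx⟩

lemma lpNorm_zero (hp : 0 < p) : _root_.lpNorm p Ω 0 = 0 := by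
  simp [_root_.lpNorm, Real.zero_rpow hp.ne', hp]

lemma gradLpNorm_zero (hp : 0 < p) : gradLpNorm p Ω 0 = 0 := by
  simp [gradLpNorm, Real.zero_rpow hp.ne', hp]

lemma Kfunc_le_lpNorm (hp : 0 < p) (f : ℝ² → ℝ) (ℓ : ℝ) :
    Kfunc p Ω f ℓ ≤ _root_.lpNorm p Ω f := by
  refine (iInf₂_le_of_le f 0 <| iInf₂_le_of_le (fun x _ => by simp)
    (fun x _ => differentiableAt_const 0) le_rfl).trans_eq ?_
  rw [lpNorm_zero hp, gradLpNorm_zero hp, add_zero, mul_zero, add_zero]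

lemma Kfunc_le_ofReal_mul {f : ℝ² → ℝ} (hp : 0 < p)
    (hf : ∀ x ∈ Ω, DifferentiableAt ℝ f x) (ℓ : ℝ) :
    Kfunc p Ω f ℓ ≤ ENNReal.ofReal ℓ * (_root_.lpNorm p Ω f + gradLpNorm p Ω f) := by
  refine (iInf₂_le_of_le 0 f <| iInf₂_le_of_le (fun x _ => by simp) hf le_rfl).trans_eq ?_
  rw [lpNorm_zero hp, zero_add]

theorem interpSeminormP_lt_top {s : ℝ} {f : ℝ² → ℝ} (hp : 0 < p)
    (hs0 : 0 < s) (hs1 : s < 1) (hf : ∀ x ∈ Ω, DifferentiableAt ℝ f x)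
    (hf_lp : _root_.lpNorm p Ω f < ⊤) (hf_grad : gradLpNorm p Ω f < ⊤) :
    interpSeminormP p s Ω f < ⊤ :=
  lintegral_interpolation_lt_top hf_lp.ne (ENNReal.add_lt_top.mpr ⟨hf_lp, hf_grad⟩).ne
    (Kfunc_le_lpNorm hp f) (Kfunc_le_ofReal_mul hp hf) hp hs0 hs1

end KFunctional

def coordBox (A B : Set ℝ) : Set (ℝ²) := {x | x 0 ∈ A ∧ x 1 ∈ B}

def coordEquiv : ℝ² ≃ᵐ ℝ × ℝ :=
  (MeasurableEquiv.toLp 2 (Fin 2 → ℝ)).symm.trans MeasurableEquiv.finTwoArrow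

lemma measurePreserving_coordEquiv : MeasurePreserving coordEquiv :=
  (EuclideanSpace.volume_preserving_symm_measurableEquiv_toLp (Fin 2)).trans
    (volume_preserving_finTwoArrow ℝ)

lemma coordBox_eq_preimage (A B : Set ℝ) : coordBox A B = coordEquiv ⁻¹' (A ×ˢ B) := rfl

lemma measurableSet_coordBox {A B : Set ℝ} (hA : MeasurableSet A) (hB : MeasurableSet B) :
    MeasurableSet (coordBox A B) :=
  coordEquiv.measurable (hA.prod hB)

lemma volume_coordBox (A B : Set ℝ) : volume (coordBox A B) = volume A * volume B := by
  rw [coordBox_eq_preimage, measurePreserving_coordEquiv.measure_preimage_equiv,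
    Measure.volume_eq_prod, Measure.prod_prod]

lemma setLIntegral_coordBox_comp_snd (A B : Set ℝ) {G : ℝ → ℝ≥0∞} (hG : Measurable G) :
    ∫⁻ x in coordBox A B, G (x 1) = volume A * ∫⁻ t in B, G t := by
  refine (measurePreserving_coordEquiv.setLIntegral_comp_preimage_emb
    coordEquiv.measurableEmbedding (fun z => G z.2) (A ×ˢ B)).trans ?_
  rw [Measure.volume_eq_prod, ← Measure.prod_restrict]
  simpa using lintegral_prod_mul (μ := volume.restrict A) (ν := volume.restrict B)
    (f := fun _ => (1 : ℝ≥0∞)) aemeasurable_const hG.aemeasurable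

lemma dist_le_of_abs_sub_coord_le {x y : ℝ²} {a b : ℝ}
    (h0 : |x 0 - y 0| ≤ a) (h1 : |x 1 - y 1| ≤ b) : dist x y ≤ a + b := by
  have ha : 0 ≤ a := (abs_nonneg _).trans h0
  have hb : 0 ≤ b := (abs_nonneg _).trans h1
  rw [EuclideanSpace.dist_eq, Fin.sum_univ_two, Real.dist_eq, Real.dist_eq,
    ← Real.sqrt_sq (add_nonneg ha hb)]
  refine Real.sqrt_le_sqrt ?_
  rw [sq_abs, sq_abs]
  nlinarith [abs_le.mp h0, abs_le.mp h1, mul_nonneg ha hb]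

lemma slitSquare_eq :
    slitSquare = coordBox (Ioo (-1) 1) (Ioo (-1) 1) \ coordBox (Ioo 0 1) {0} := rfl

lemma measurableSet_slitSquare : MeasurableSet slitSquare :=
  (measurableSet_coordBox measurableSet_Ioo measurableSet_Ioo).diff
    (measurableSet_coordBox measurableSet_Ioo (measurableSet_singleton 0))

lemma volume_slitSquare_ne_top : volume slitSquare ≠ ⊤ := by
  refine ne_top_of_le_ne_top ?_ (measure_mono (slitSquare_eq ▸ sdiff_subset))
  simp [volume_coordBox, ENNReal.mul_eq_top]

lemma nonpos_of_mem_slitSquare_of_snd_eq_zero {x : ℝ²}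
    (hx : x ∈ slitSquare) (h1 : x 1 = 0) : x 0 ≤ 0 :=
  not_lt.mp fun h0 => hx.2 ⟨⟨h0, hx.1.1.2⟩, h1⟩

section SqueezeDerivative

variable {𝕜 E F G : Type*} [NontriviallyNormedField 𝕜] [NormedAddCommGroup E] [NormedSpace 𝕜 E]
  [NormedAddCommGroup F] [NormedSpace 𝕜 F] [NormedAddCommGroup G] [NormedSpace 𝕜 G]

lemma HasFDerivAt.zero_of_norm_le {f : E → F} {g : E → G} {x : E}
    (hg : HasFDerivAt g (0 : E →L[𝕜] G) x) (hgx : g x = 0) (hfx : f x = 0)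
    (hfg : ∀ y, ‖f y‖ ≤ ‖g y‖) : HasFDerivAt f (0 : E →L[𝕜] F) x := by
  rw [hasFDerivAt_iff_isLittleO_nhds_zero] at hg ⊢
  simp only [hgx, hfx, sub_zero, zero_apply] at hg ⊢
  exact (Asymptotics.isBigO_of_le _ fun v => hfg (x + v)).trans_isLittleO hg

end SqueezeDerivative

lemma EuclideanSpace.norm_proj_le {𝕜 ι : Type*} [RCLike 𝕜] [Fintype ι] (i : ι) :
    ‖EuclideanSpace.proj (𝕜 := 𝕜) i‖ ≤ 1 :=
  ContinuousLinearMap.opNorm_le_bound _ zero_le_one fun x => by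
    simpa using PiLp.norm_apply_le x i

def posPartSq (t : ℝ) : ℝ := max t 0 ^ 2

lemma posPartSq_nonneg (t : ℝ) : 0 ≤ posPartSq t := sq_nonneg _

lemma posPartSq_le_sq (t : ℝ) : posPartSq t ≤ t ^ 2 := by
  rw [posPartSq, ← sq_abs t]
  exact pow_le_pow_left₀ (le_max_right t 0) (max_le (le_abs_self t) (abs_nonneg t)) 2

lemma hasDerivAt_posPartSq (t : ℝ) : HasDerivAt posPartSq (2 * max t 0) t := by
  rcases lt_trichotomy t 0 with ht | rfl | ht
  · have hloc : posPartSq =ᶠ[𝓝 t] fun _ => 0 := by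
      filter_upwards [Iio_mem_nhds ht] with u (hu : u < 0)
      simp [posPartSq, max_eq_right (le_of_lt hu)]
    rw [max_eq_right ht.le, mul_zero]
    exact (hasDerivAt_const t 0).congr_of_eventuallyEq hloc
  · have hsq : HasFDerivAt (fun u : ℝ => u ^ 2) (0 : ℝ →L[ℝ] ℝ) 0 := by
      simpa using (hasDerivAt_pow 2 (0 : ℝ)).hasFDerivAt
    have := hsq.zero_of_norm_le (f := posPartSq) (by simp) (by simp [posPartSq]) fun u => by
      simpa [abs_of_nonneg (posPartSq_nonneg u)] using posPartSq_le_sq u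
    simpa [hasDerivAt_iff_hasFDerivAt] using this
  · have hloc : posPartSq =ᶠ[𝓝 t] fun u => u ^ 2 := by
      filter_upwards [Ioi_mem_nhds ht] with u (hu : 0 < u)
      simp [posPartSq, max_eq_left (le_of_lt hu)]
    rw [max_eq_left ht.le]
    simpa using (hasDerivAt_pow 2 t).congr_of_eventuallyEq hloc

def slitRamp (x : ℝ²) : ℝ := if 0 < x 1 then posPartSq (x 0) else 0

lemma slitRamp_nonneg (x : ℝ²) : 0 ≤ slitRamp x := by
  unfold slitRamp; split_ifs
  exacts [posPartSq_nonneg _, le_rfl]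

lemma slitRamp_le_posPartSq (x : ℝ²) : slitRamp x ≤ posPartSq (x 0) := by
  unfold slitRamp; split_ifs
  exacts [le_rfl, posPartSq_nonneg _]

lemma measurable_slitRamp : Measurable slitRamp :=
  Measurable.ite (measurableSet_lt measurable_const (PiLp.continuous_apply 2 _ 1).measurable)
    (((PiLp.continuous_apply 2 _ 0).measurable.max measurable_const).pow_const 2) measurable_const

lemma abs_slitRamp_le_one {x : ℝ²} (hx : x ∈ slitSquare) :
    |slitRamp x| ≤ 1 := by
  rw [abs_of_nonneg (slitRamp_nonneg x)]
  refine (slitRamp_le_posPartSq x).trans ?_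
  have := hx.1.1
  exact pow_le_one₀ (le_max_right _ _) (max_le this.2.le zero_le_one)

lemma hasFDerivAt_slitRamp {x : ℝ²} (hx : x ∈ slitSquare) :
    ∃ c ∈ Icc (0 : ℝ) 2,
      HasFDerivAt slitRamp (c • (EuclideanSpace.proj 0 : ℝ² →L[ℝ] ℝ)) x := by
  have hr : HasFDerivAt (fun y : ℝ² => posPartSq (y 0))
      ((2 * max (x 0) 0) • (EuclideanSpace.proj 0 : ℝ² →L[ℝ] ℝ)) x :=
    (hasDerivAt_posPartSq (x 0)).comp_hasFDerivAt
      (f := (EuclideanSpace.proj 0 : ℝ² →L[ℝ] ℝ)) x (ContinuousLinearMap.hasFDerivAt _)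
  rcases lt_trichotomy (x 1) 0 with h1 | h1 | h1
  · refine ⟨0, ⟨le_rfl, zero_le_two⟩, ?_⟩
    have hloc : slitRamp =ᶠ[𝓝 x] fun _ => 0 := by
      filter_upwards [(PiLp.continuous_apply 2 _ 1).continuousAt.eventually_lt
        continuousAt_const h1] with y hy
      simp [slitRamp, not_lt.mpr (le_of_lt hy)]
    simpa using (hasFDerivAt_const 0 x).congr_of_eventuallyEq hloc
  · have hx0 : max (x 0) 0 = 0 :=
      max_eq_right (nonpos_of_mem_slitSquare_of_snd_eq_zero hx h1)
    refine ⟨0, ⟨le_rfl, zero_le_two⟩, ?_⟩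
    rw [hx0, mul_zero, zero_smul] at hr
    rw [zero_smul]
    refine hr.zero_of_norm_le (by simp [posPartSq, hx0]) (by simp [slitRamp, h1]) fun y => ?_
    simpa [abs_of_nonneg (slitRamp_nonneg y), abs_of_nonneg (posPartSq_nonneg _)]
      using slitRamp_le_posPartSq y
  · refine ⟨2 * max (x 0) 0, ⟨by positivity, ?_⟩, ?_⟩
    · linarith [max_le hx.1.1.2.le zero_le_one]
    have hloc : slitRamp =ᶠ[𝓝 x] fun y => posPartSq (y 0) := by
      filter_upwards [continuousAt_const.eventually_lt
        (PiLp.continuous_apply 2 _ 1).continuousAt h1] with y hy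
      simp [slitRamp, hy]
    exact hr.congr_of_eventuallyEq hloc

lemma differentiableAt_slitRamp {x : ℝ²} (hx : x ∈ slitSquare) :
    DifferentiableAt ℝ slitRamp x :=
  let ⟨_, _, hd⟩ := hasFDerivAt_slitRamp hx
  hd.differentiableAt

lemma norm_fderiv_slitRamp_le {x : ℝ²} (hx : x ∈ slitSquare) :
    ‖fderiv ℝ slitRamp x‖ ≤ 2 := by
  obtain ⟨c, hc, hd⟩ := hasFDerivAt_slitRamp hx
  rw [hd.fderiv]
  calc ‖c • (EuclideanSpace.proj 0 : ℝ² →L[ℝ] ℝ)‖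
      = ‖c‖ * ‖(EuclideanSpace.proj 0 : ℝ² →L[ℝ] ℝ)‖ := norm_smul _ _
    _ ≤ 2 * 1 := by
      gcongr
      · exact (Real.norm_of_nonneg hc.1).trans_le hc.2
      · exact EuclideanSpace.norm_proj_le 0
    _ = 2 := mul_one 2

lemma memLp_slitRamp {q : ℝ≥0∞} : MemLp slitRamp q (volume.restrict slitSquare) := by
  have := isFiniteMeasure_restrict.mpr volume_slitSquare_ne_top
  refine MemLp.of_bound measurable_slitRamp.aestronglyMeasurable 1 ?_
  exact (ae_restrict_iff' measurableSet_slitSquare).mpr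
    (Eventually.of_forall fun _ => abs_slitRamp_le_one)

section GagliardoDivergence

variable {p q : ℝ}

lemma ofReal_mul_measure_le_setLIntegral_jump {α : Type*} [PseudoMetricSpace α]
    [MeasurableSpace α] {μ : Measure α} {f : α → ℝ} {Ω B : Set α} {x : α} {δ r : ℝ}
    (hB : MeasurableSet B) (hBΩ : B ⊆ Ω) (hp : 0 ≤ p) (hq : 0 ≤ q) (hδ : 0 ≤ δ)
    (hjump : ∀ y ∈ B, δ ≤ |f x - f y|) (hdist : ∀ y ∈ B, 0 < dist x y ∧ dist x y ≤ r) :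
    ENNReal.ofReal (δ ^ p / r ^ q) * μ B
      ≤ ∫⁻ y in Ω, ENNReal.ofReal (|f x - f y| ^ p / dist x y ^ q) ∂μ :=
  calc ENNReal.ofReal (δ ^ p / r ^ q) * μ B
      = ∫⁻ _ in B, ENNReal.ofReal (δ ^ p / r ^ q) ∂μ := (setLIntegral_const _ _).symm
    _ ≤ ∫⁻ y in B, ENNReal.ofReal (|f x - f y| ^ p / dist x y ^ q) ∂μ :=
      setLIntegral_mono' hB fun y hy => ENNReal.ofReal_le_ofReal <|
        div_le_div₀ (by positivity) (Real.rpow_le_rpow hδ (hjump y hy) hp)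
          (Real.rpow_pos_of_pos (hdist y hy).1 q)
          (Real.rpow_le_rpow dist_nonneg (hdist y hy).2 hq)
    _ ≤ ∫⁻ y in Ω, ENNReal.ofReal (|f x - f y| ^ p / dist x y ^ q) ∂μ :=
      lintegral_mono_set hBΩ

lemma le_setLIntegral_slitRamp_jump {x : ℝ²}
    (hx : x ∈ coordBox (Ioo (1 / 2) (5 / 8)) (Ioo 0 (1 / 8))) (hp : 0 ≤ p) (hq : 0 ≤ q) :
    ENNReal.ofReal ((1 / 4) ^ p * 3 ^ (-q) * x 1 ^ (2 - q))
      ≤ ∫⁻ y in slitSquare, ENNReal.ofReal (|slitRamp x - slitRamp y| ^ p / dist x y ^ q) := by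
  obtain ⟨⟨ha₁, ha₂⟩, ⟨ht₁, ht₂⟩⟩ := hx
  set a := x 0
  set t := x 1
  set B := coordBox (Ioo a (a + t)) (Ioo (-t) 0)
  have hBΩ : B ⊆ slitSquare := by
    rintro y ⟨⟨hy₁, hy₂⟩, ⟨hy₃, hy₄⟩⟩
    exact ⟨⟨⟨by linarith, by linarith⟩, ⟨by linarith, by linarith⟩⟩, fun h => hy₄.ne h.2⟩
  have hjump : ∀ y ∈ B, 1 / 4 ≤ |slitRamp x - slitRamp y| := by
    rintro y ⟨-, -, hy⟩
    have hx : slitRamp x = a ^ 2 := by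
      rw [slitRamp, if_pos ht₁, posPartSq, max_eq_left (by linarith)]
    have hy : slitRamp y = 0 := by simp [slitRamp, hy.le]
    rw [hx, hy, sub_zero, abs_of_nonneg (sq_nonneg a)]
    nlinarith
  have hdist : ∀ y ∈ B, 0 < dist x y ∧ dist x y ≤ 3 * t := by
    rintro y ⟨⟨hy₁, hy₂⟩, ⟨hy₃, hy₄⟩⟩
    refine ⟨dist_pos.mpr fun h => (ht₁.trans' hy₄).ne (h ▸ rfl), ?_⟩
    have := dist_le_of_abs_sub_coord_le (x := x) (y := y) (a := t) (b := 2 * t)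
      (abs_le.mpr ⟨by linarith, by linarith⟩) (abs_le.mpr ⟨by linarith, by linarith⟩)
    linarith
  refine le_trans (le_of_eq ?_) (ofReal_mul_measure_le_setLIntegral_jump
    (measurableSet_coordBox measurableSet_Ioo measurableSet_Ioo) hBΩ hp hq (by norm_num) hjump hdist)
  rw [volume_coordBox, Real.volume_Ioo, Real.volume_Ioo, add_sub_cancel_left, sub_neg_eq_add,
    zero_add, ← ENNReal.ofReal_mul (by positivity), ← ENNReal.ofReal_mul (by positivity)]
  congr 1
  rw [Real.mul_rpow (by norm_num) ht₁.le, Real.rpow_neg (by norm_num), Real.rpow_sub ht₁,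
    Real.rpow_two]
  field_simp

theorem setLIntegral_slitRamp_gagliardo_eq_top (hp : 0 ≤ p) (hq : 3 ≤ q) :
    ∫⁻ x in slitSquare, ∫⁻ y in slitSquare,
      ENNReal.ofReal (|slitRamp x - slitRamp y| ^ p / dist x y ^ q) = ⊤ := by
  set c : ℝ := (1 / 4) ^ p * 3 ^ (-q)
  have hc : 0 < c := by positivity
  have hS : coordBox (Ioo (1 / 2) (5 / 8)) (Ioo 0 (1 / 8)) ⊆ slitSquare := by
    rintro y ⟨⟨hy₁, hy₂⟩, ⟨hy₃, hy₄⟩⟩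
    exact ⟨⟨⟨by linarith, by linarith⟩, ⟨by linarith, by linarith⟩⟩, fun h => hy₃.ne' h.2⟩
  have hlower : ∫⁻ x in coordBox (Ioo (1 / 2) (5 / 8)) (Ioo 0 (1 / 8)),
      ENNReal.ofReal (c * x 1 ^ (2 - q)) = ⊤ := by
    rw [setLIntegral_coordBox_comp_snd _ _ (G := fun t => ENNReal.ofReal (c * t ^ (2 - q)))
      (by fun_prop)]
    simp_rw [ENNReal.ofReal_mul hc.le]
    rw [lintegral_const_mul _ (by fun_prop),
      setLIntegral_Ioo_rpow_eq_top (by linarith) (by norm_num : (0 : ℝ) < 1 / 8)]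
    simp [hc, ENNReal.mul_top]
    norm_num
  rw [← top_le_iff, ← hlower]
  exact (setLIntegral_mono' (measurableSet_coordBox measurableSet_Ioo measurableSet_Ioo)
    fun x hx => le_setLIntegral_slitRamp_jump hx hp (by linarith)).trans (lintegral_mono_set hS)

end GagliardoDivergence

/-- For the slit square `Ω`, `1 ≤ p < ∞` and `1/p < s < 1`, the interpolation
space differs from `W^{s,p}(Ω)`: there is `f ∈ L^p(Ω)` with
`∫₀^∞ (ℓ^{-s}K(ℓ,f))^p dℓ/ℓ < ∞` but `∫_Ω ∫_Ω |f(x)-f(y)|^p/|x-y|^{2+sp} dy dx = ∞`. -/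
theorem slit_square_interp_ne_Wsp
    (p s : ℝ) (hp : 1 ≤ p) (hs0 : 1 / p < s) (hs1 : s < 1) :
    ∃ f : EuclideanSpace ℝ (Fin 2) → ℝ,
      MemLp f (ENNReal.ofReal p) (volume.restrict slitSquare) ∧
      interpSeminormP p s slitSquare f < ⊤ ∧
      (∫⁻ x in slitSquare, ∫⁻ y in slitSquare,
          ENNReal.ofReal (|f x - f y| ^ p / dist x y ^ ((2 : ℝ) + s * p))) = ⊤ := by
  have hp0 : 0 < p := zero_lt_one.trans_le hp
  have hs_pos : 0 < s := lt_trans (by positivity) hs0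
  have hsp : 1 < s * p := by rwa [div_lt_iff₀ hp0] at hs0
  refine ⟨slitRamp, memLp_slitRamp, ?_,
    setLIntegral_slitRamp_gagliardo_eq_top hp0.le (by linarith)⟩
  exact interpSeminormP_lt_top hp0 hs_pos hs1 (fun _ => differentiableAt_slitRamp)
    (lpNorm_lt_top_of_abs_le hp0 volume_slitSquare_ne_top fun _ => abs_slitRamp_le_one)
    (gradLpNorm_lt_top_of_norm_fderiv_le hp0 volume_slitSquare_ne_top
      fun _ => norm_fderiv_slitRamp_le)

end
end
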